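/- arXiv:1602.02063 — 2 statements merged into one kernel-verified Lean document; each statement's English description precedes it below -/
import Mathlib

section
/- Assume U is monotone and the rows of P are sorted by strength: P i l ≥ P j l for all 1 ≤ i ≤ j ≤ m and all 1 ≤ l ≤ n. Let 0 ≤ k ≤ T, let X_1, X_2 ⊆ {1,…,m} and Y ⊆ {1,…,n} with |X_1| = |X_2| = |Y| = k, and let w_1 ≥ w_2 be integers in {0,…,k}. If the set of the T−k smallest elements of {1,…,m}∖X_1 equals the set of the T−k smallest elements of {1,…,m}∖X_2, then V(X_1,Y,w_1) ≥ V(X_2,Y,w_2). -/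
/-- Value function of the team competition `G(T,P,U)`, by backward induction.
`gval m n P U r X Y w` is the value of the state where the players in `X` (Team 1)
and `Y` (Team 2) have already played, Team 1 has won `w` rounds so far, and
`r = T - |X|` rounds remain to be played.  The value of the whole game is
`gval m n P U T ∅ ∅ 0`. -/
noncomputable def gval (m n : ℕ) (P : Fin m → Fin n → ℝ) (U : ℕ → ℝ) :
    ℕ → Finset (Fin m) → Finset (Fin n) → ℕ → ℝ
  | 0, _, _, w => U w
  | r + 1, X, Y, w =>
      sSup {v : ℝ | ∃ p : Fin m → ℝ,
        (∀ i, 0 ≤ p i) ∧ (∀ i ∈ X, p i = 0) ∧ (∑ i, p i) = 1 ∧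
        v = sInf {u : ℝ | ∃ j, j ∉ Y ∧
          u = ∑ i, p i *
            (P i j * gval m n P U r (insert i X) (insert j Y) (w + 1) +
             (1 - P i j) * gval m n P U r (insert i X) (insert j Y) w)}}

/-!
Induction on the number `r` of remaining rounds, with the invariant that the `r` strongest
remaining players of Team 1 are the same in both states. Each player `i` that Team 1 may still
field in the weaker state is matched with a player `x ≤ i`, hence at least as strong, of the
stronger state so that the invariant survives one more round: `x = i` if `i` is among the `r`
strongest, and otherwise `x` is the `r`-th strongest. Pushing a mixed strategy forward along
`i ↦ x` guarantees at least as much against every reply. The inductive hypothesis in the special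
case of equal states says that one more win never hurts, which is what makes the stronger
player `x` at least as good as `i`.
-/

namespace List

variable {α : Type*} [LinearOrder α]

theorem exists_take_erase_eq_take_erase {l₁ l₂ : List α} {r : ℕ} (hl₁ : l₁.Nodup)
    (hl₂ : l₂.Pairwise (· ≤ ·)) (hr : r < l₂.length)
    (h : l₁.take (r + 1) = l₂.take (r + 1)) {i : α} (hi : i ∈ l₂) :
    ∃ x ∈ l₁, x ≤ i ∧ (l₁.erase x).take r = (l₂.erase i).take r := by
  set L := l₂.take (r + 1) with hL
  have hLlen : L.length = r + 1 := by rw [hL, length_take]; omega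
  have hsplit₁ : l₁ = L ++ l₁.drop (r + 1) := by rw [← h, take_append_drop]
  have hsplit₂ : l₂ = L ++ l₂.drop (r + 1) := (take_append_drop _ _).symm
  by_cases hiL : i ∈ L
  · refine ⟨i, hsplit₁ ▸ mem_append_left _ hiL, le_rfl, ?_⟩
    rw [hsplit₁, hsplit₂, erase_append_left _ hiL, erase_append_left _ hiL,
      take_left' (by rw [length_erase_of_mem hiL]; omega),
      take_left' (by rw [length_erase_of_mem hiL]; omega)]
  · have hrL : r < L.length := by omega
    have hLr : L[r] ∈ L := getElem_mem hrL
    refine ⟨L[r], hsplit₁ ▸ mem_append_left _ hLr, ?_, ?_⟩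
    · rw [hsplit₂, pairwise_append] at hl₂
      rw [hsplit₂, mem_append] at hi
      exact hl₂.2.2 _ hLr _ (hi.resolve_left hiL)
    · have hLnodup : L.Nodup := h ▸ hl₁.sublist (take_sublist _ _)
      rw [hsplit₁, erase_append_left _ hLr, hsplit₂, erase_append_right _ hiL,
        take_append_of_le_length (by rw [length_erase_of_mem hLr]; omega),
        take_append_of_le_length (by omega), hLnodup.erase_getElem,
        take_eraseIdx_eq_take_of_le _ _ _ le_rfl]

end List

namespace Finset

variable {α : Type*} [LinearOrder α]

theorem sort_erase [DecidableEq α] (s : Finset α) (a : α) :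
    (s.erase a).sort = s.sort.erase a := by
  refine List.Perm.eq_of_pairwise' (pairwise_sort _ _)
    ((pairwise_sort s _).sublist List.erase_sublist) ?_
  rw [← Multiset.coe_eq_coe, ← Multiset.coe_erase, sort_eq, sort_eq, erase_val]

end Finset

section ShareSmallest

variable {α : Type*} [LinearOrder α]

def ShareSmallest (r : ℕ) (A B : Finset α) : Prop :=
  r ≤ A.card ∧ r ≤ B.card ∧ A.sort.take r = B.sort.take r

theorem ShareSmallest.refl {r : ℕ} {A : Finset α} (h : r ≤ A.card) : ShareSmallest r A A :=
  ⟨h, h, rfl⟩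

theorem ShareSmallest.exists_erase {r : ℕ} {A B : Finset α} (h : ShareSmallest (r + 1) A B)
    {i : α} (hi : i ∈ B) : ∃ x ∈ A, x ≤ i ∧ ShareSmallest r (A.erase x) (B.erase i) := by
  obtain ⟨hA, hB, htake⟩ := h
  obtain ⟨x, hx, hxi, htake'⟩ := List.exists_take_erase_eq_take_erase (Finset.sort_nodup A _)
    (Finset.pairwise_sort B _) (by rw [Finset.length_sort]; omega) htake
    ((Finset.mem_sort _).2 hi)
  rw [Finset.mem_sort] at hx
  refine ⟨x, hx, hxi, ?_, ?_, by rwa [Finset.sort_erase, Finset.sort_erase]⟩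
  · rw [Finset.card_erase_of_mem hx]; omega
  · rw [Finset.card_erase_of_mem hi]; omega

end ShareSmallest

section MatrixGame

variable {ι κ : Type*} [Fintype ι] [Finite κ]

noncomputable def securityLevel (Y : Finset κ) (f : ι → κ → ℝ) (p : ι → ℝ) : ℝ :=
  sInf {u | ∃ j, j ∉ Y ∧ u = ∑ i, p i * f i j}

noncomputable def maxminValue (X : Finset ι) (Y : Finset κ) (f : ι → κ → ℝ) : ℝ :=
  sSup {v | ∃ p : ι → ℝ, (∀ i, 0 ≤ p i) ∧ (∀ i ∈ X, p i = 0) ∧ (∑ i, p i) = 1 ∧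
    v = securityLevel Y f p}

theorem securityLevel_le {Y : Finset κ} {f : ι → κ → ℝ} (p : ι → ℝ) {j : κ} (hj : j ∉ Y) :
    securityLevel Y f p ≤ ∑ i, p i * f i j :=
  csInf_le ((Set.finite_range fun j ↦ ∑ i, p i * f i j).subset
    (by rintro _ ⟨j, -, rfl⟩; exact ⟨j, rfl⟩)).bddBelow ⟨j, hj, rfl⟩

theorem securityLevel_le_securityLevel {Y : Finset κ} {f g : ι → κ → ℝ} {p q : ι → ℝ}
    (hY : ∃ j, j ∉ Y) (h : ∀ j ∉ Y, ∑ i, p i * f i j ≤ ∑ i, q i * g i j) :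
    securityLevel Y f p ≤ securityLevel Y g q := by
  obtain ⟨j₀, hj₀⟩ := hY
  refine le_csInf ⟨_, j₀, hj₀, rfl⟩ ?_
  rintro _ ⟨j, hj, rfl⟩
  exact (securityLevel_le p hj).trans (h j hj)

theorem bddAbove_securityLevels {X : Finset ι} {Y : Finset κ} {f : ι → κ → ℝ}
    (hY : ∃ j, j ∉ Y) :
    BddAbove {v | ∃ p : ι → ℝ, (∀ i, 0 ≤ p i) ∧ (∀ i ∈ X, p i = 0) ∧ (∑ i, p i) = 1 ∧
      v = securityLevel Y f p} := by
  obtain ⟨j, hj⟩ := hY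
  refine ⟨∑ i, |f i j|, ?_⟩
  rintro _ ⟨p, hp0, -, hp1, rfl⟩
  refine (securityLevel_le p hj).trans (Finset.sum_le_sum fun i _ ↦ ?_)
  have hp : p i ≤ 1 := hp1 ▸ Finset.single_le_sum (fun i _ ↦ hp0 i) (Finset.mem_univ i)
  calc p i * f i j ≤ p i * |f i j| := mul_le_mul_of_nonneg_left (le_abs_self _) (hp0 i)
    _ ≤ |f i j| := mul_le_of_le_one_left (abs_nonneg _) hp

theorem sum_fiberwise_mul [DecidableEq ι] (φ : ι → ι) (p g : ι → ℝ) :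
    ∑ x, (∑ i with φ i = x, p i) * g x = ∑ i, p i * g (φ i) := by
  calc ∑ x, (∑ i with φ i = x, p i) * g x = ∑ x, ∑ i with φ i = x, p i * g (φ i) := by
        refine Finset.sum_congr rfl fun x _ ↦ ?_
        rw [Finset.sum_mul]
        exact Finset.sum_congr rfl fun i hi ↦ by rw [(Finset.mem_filter.1 hi).2]
    _ = ∑ i, p i * g (φ i) := Finset.sum_fiberwise _ φ _

theorem maxminValue_le_of_forall_exists_le {X₁ X₂ : Finset ι} {Y : Finset κ}
    {f₁ f₂ : ι → κ → ℝ} (hX₂ : ∃ i, i ∉ X₂) (hY : ∃ j, j ∉ Y)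
    (h : ∀ i ∉ X₂, ∃ x ∉ X₁, ∀ j ∉ Y, f₂ i j ≤ f₁ x j) :
    maxminValue X₂ Y f₂ ≤ maxminValue X₁ Y f₁ := by
  classical
  obtain ⟨i₀, hi₀⟩ := hX₂
  have : Nonempty ι := ⟨i₀⟩
  choose! φ hφX hφf using h
  have hsingle : 0 ≤ Pi.single i₀ (1 : ℝ) := (Pi.single_nonneg (α := fun _ ↦ ℝ)).2 zero_le_one
  refine csSup_le ⟨_, Pi.single i₀ 1, hsingle,
    fun i hi ↦ Pi.single_eq_of_ne (ne_of_mem_of_not_mem hi hi₀) _, by simp, rfl⟩ ?_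
  rintro _ ⟨p, hp0, hpX, hp1, rfl⟩
  set q : ι → ℝ := fun x ↦ ∑ i with φ i = x, p i
  have hq : ∀ g : ι → ℝ, ∑ x, q x * g x = ∑ i, p i * g (φ i) := sum_fiberwise_mul φ p
  have hqX : ∀ x ∈ X₁, q x = 0 := fun x hx ↦ Finset.sum_eq_zero fun i hi ↦
    by_contra fun hpi ↦ hφX i (fun hiX ↦ hpi (hpX i hiX)) ((Finset.mem_filter.1 hi).2 ▸ hx)
  refine (securityLevel_le_securityLevel hY fun j hj ↦ ?_).trans
    (le_csSup (bddAbove_securityLevels hY)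
      ⟨q, fun x ↦ Finset.sum_nonneg fun i _ ↦ hp0 i, hqX, by simpa [hp1] using hq 1, rfl⟩)
  rw [hq]
  refine Finset.sum_le_sum fun i _ ↦ ?_
  by_cases hi : i ∈ X₂
  · simp [hpX i hi]
  · exact mul_le_mul_of_nonneg_left (hφf i hi j hj) (hp0 i)

end MatrixGame

theorem lottery_le_lottery {p q a b a' b' : ℝ} (hp : 0 ≤ p) (hpq : p ≤ q) (hq : q ≤ 1)
    (ha : a ≤ a') (hb : b ≤ b') (hba : b' ≤ a') :
    p * a + (1 - p) * b ≤ q * a' + (1 - q) * b' := by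
  nlinarith

theorem gval_succ (m n : ℕ) (P : Fin m → Fin n → ℝ) (U : ℕ → ℝ) (r : ℕ) (X : Finset (Fin m))
    (Y : Finset (Fin n)) (w : ℕ) :
    gval m n P U (r + 1) X Y w = maxminValue X Y fun i j ↦
      P i j * gval m n P U r (insert i X) (insert j Y) (w + 1) +
        (1 - P i j) * gval m n P U r (insert i X) (insert j Y) w :=
  rfl

open Finset in
theorem gval_le_gval_of_shareSmallest {m n T : ℕ} {P : Fin m → Fin n → ℝ} {U : ℕ → ℝ}
    (hP : ∀ i j, P i j ∈ Set.Icc (0 : ℝ) 1) (hU : MonotoneOn U (Set.Iic T))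
    (hsorted : ∀ i j : Fin m, i ≤ j → ∀ l : Fin n, P j l ≤ P i l) (r : ℕ) :
    ∀ {X₁ X₂ : Finset (Fin m)} {Y : Finset (Fin n)} {w₁ w₂ : ℕ},
      w₂ ≤ w₁ → w₁ + r ≤ T → ShareSmallest r X₁ᶜ X₂ᶜ → r ≤ Yᶜ.card →
      gval m n P U r X₂ Y w₂ ≤ gval m n P U r X₁ Y w₁ := by
  induction r with
  | zero =>
    intro X₁ X₂ Y w₁ w₂ hw hwT _ _
    exact hU (Set.mem_Iic.2 (by omega)) (Set.mem_Iic.2 (by omega)) hw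
  | succ r ih =>
    intro X₁ X₂ Y w₁ w₂ hw hwT hX hY
    rw [gval_succ, gval_succ]
    refine maxminValue_le_of_forall_exists_le ?_ ?_ fun i hi ↦ ?_
    · obtain ⟨i, hi⟩ := card_pos.1 (r.succ_pos.trans_le hX.2.1)
      exact ⟨i, mem_compl.1 hi⟩
    · obtain ⟨j, hj⟩ := card_pos.1 (r.succ_pos.trans_le hY)
      exact ⟨j, mem_compl.1 hj⟩
    obtain ⟨x, hx, hxi, hX'⟩ := hX.exists_erase (mem_compl.2 hi)
    rw [← compl_insert, ← compl_insert] at hX'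
    refine ⟨x, mem_compl.1 hx, fun j hj ↦ ?_⟩
    have hY' : r ≤ (insert j Y)ᶜ.card := by
      rw [compl_insert, card_erase_of_mem (mem_compl.2 hj)]; omega
    exact lottery_le_lottery (hP i j).1 (hsorted x i hxi j) (hP x j).2
      (ih (by omega) (by omega) hX' hY') (ih hw (by omega) hX' hY')
      (ih (Nat.le_succ w₁) (by omega) (.refl hX'.1) hY')

theorem value_monotone_in_state_general (T m n : ℕ) (hm : T ≤ m) (hn : T ≤ n)
    (P : Fin m → Fin n → ℝ) (hP : ∀ i j, P i j ∈ Set.Icc (0 : ℝ) 1)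
    (U : ℕ → ℝ) (hU : ∀ t < T, U t ≤ U (t + 1))
    (hsorted : ∀ i j : Fin m, i ≤ j → ∀ l : Fin n, P j l ≤ P i l)
    (k : ℕ) (hk : k ≤ T)
    (X₁ X₂ : Finset (Fin m)) (Y : Finset (Fin n))
    (hX₁ : X₁.card = k) (hX₂ : X₂.card = k) (hY : Y.card = k)
    (w₁ w₂ : ℕ) (hw₁ : w₁ ≤ k) (hw : w₂ ≤ w₁)
    (htop : (Finset.sort X₁ᶜ (· ≤ ·)).take (T - k) =
            (Finset.sort X₂ᶜ (· ≤ ·)).take (T - k)) :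
    gval m n P U (T - k) X₂ Y w₂ ≤ gval m n P U (T - k) X₁ Y w₁ := by
  have hU' : MonotoneOn U (Set.Iic T) :=
    monotoneOn_of_le_succ Set.ordConnected_Iic fun t _ _ ht ↦ hU t (Order.succ_le_iff.1 ht)
  refine gval_le_gval_of_shareSmallest hP hU' hsorted (T - k) hw (by omega)
    ⟨?_, ?_, htop⟩ ?_ <;> simp only [Finset.card_compl, Fintype.card_fin, hX₁, hX₂, hY] <;> omega

/-- Assume `U` is monotone and the rows of `P` are sorted by strength.
If two states `(X₁, Y, w₁)` and `(X₂, Y, w₂)` after `k` rounds are such that the sets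
of the `T - k` smallest (i.e. strongest) remaining players of Team 1 coincide and
`w₁ ≥ w₂`, then `V(X₁,Y,w₁) ≥ V(X₂,Y,w₂)`. -/
theorem value_monotone_in_state (T m n : ℕ) (hT : 1 ≤ T) (hm : T ≤ m) (hn : T ≤ n)
    (P : Fin m → Fin n → ℝ) (hP : ∀ i j, P i j ∈ Set.Icc (0 : ℝ) 1)
    (U : ℕ → ℝ) (hU : ∀ t < T, U t ≤ U (t + 1))
    (hsorted : ∀ i j : Fin m, i ≤ j → ∀ l : Fin n, P j l ≤ P i l)
    (k : ℕ) (hk : k ≤ T)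
    (X₁ X₂ : Finset (Fin m)) (Y : Finset (Fin n))
    (hX₁ : X₁.card = k) (hX₂ : X₂.card = k) (hY : Y.card = k)
    (w₁ w₂ : ℕ) (hw₁ : w₁ ≤ k) (hw₂ : w₂ ≤ k) (hw : w₂ ≤ w₁)
    (htop : (Finset.sort X₁ᶜ (· ≤ ·)).take (T - k) =
            (Finset.sort X₂ᶜ (· ≤ ·)).take (T - k)) :
    gval m n P U (T - k) X₂ Y w₂ ≤ gval m n P U (T - k) X₁ Y w₁ :=
  value_monotone_in_state_general T m n hm hn P hP U hU hsorted k hk X₁ X₂ Y hX₁ hX₂ hY w₁ w₂ hw₁ hw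
    htop
end

section
/- Let T ≥ 1, m = 2T−1, n = 2T−1, U = U_E (so U_E(t) = t − T/2), and let P be the m×n matrix with P i j = 1 if i = j ≤ T and P i j = 0 otherwise (Team 1 has T ordinary players, player i beating only opponent i, plus T−1 dominated players with all-zero rows; Team 2 has T−1 extra players who beat every opponent). Then V(G(T,P,U_E)) > −T/2; i.e., with T−1 dominated players recruited, Team 1 wins a strictly positive expected number of rounds. -/
/-- The utility function `U_E(t) = t - T/2`. -/
noncomputable def UE (T : ℕ) : ℕ → ℝ := fun t => (t : ℝ) - (T : ℝ) / 2

open Finset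

section Lattice

variable {α : Type*} [ConditionallyCompleteLattice α] {s : Set α} {a b : α}

theorem csInf_mem_Icc_of_subset (hs : s.Nonempty) (h : s ⊆ Set.Icc a b) :
    sInf s ∈ Set.Icc a b :=
  let ⟨_, hx⟩ := hs
  ⟨le_csInf hs fun _ hy => (h hy).1, (csInf_le ⟨a, fun _ hy => (h hy).1⟩ hx).trans (h hx).2⟩

theorem csSup_mem_Icc_of_subset (hs : s.Nonempty) (h : s ⊆ Set.Icc a b) :
    sSup s ∈ Set.Icc a b :=
  let ⟨_, hx⟩ := hs
  ⟨(h hx).1.trans (le_csSup ⟨b, fun _ hy => (h hy).2⟩ hx), csSup_le hs fun _ hy => (h hy).2⟩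

end Lattice

theorem Fin.exists_notMem_of_card_lt {k : ℕ} {s : Finset (Fin k)} (h : #s < k) : ∃ x, x ∉ s :=
  let ⟨x, _, hx⟩ := exists_mem_notMem_of_card_lt_card (t := univ) (by simpa using h)
  ⟨x, hx⟩

theorem add_le_sum_mul_of_add_le {ι : Type*} [Fintype ι] {p e f : ι → ℝ} {a : ℝ}
    (hp₀ : ∀ i, 0 ≤ p i) (hp₁ : ∑ i, p i = 1) (h : ∀ i, a + e i ≤ f i) :
    a + ∑ i, p i * e i ≤ ∑ i, p i * f i :=
  calc a + ∑ i, p i * e i = ∑ i, p i * (a + e i) := by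
        simp only [mul_add, sum_add_distrib, ← sum_mul, hp₁, one_mul]
    _ ≤ ∑ i, p i * f i := sum_le_sum fun i _ => mul_le_mul_of_nonneg_left (h i) (hp₀ i)

section GeneralGame

variable {m n : ℕ} {P : Fin m → Fin n → ℝ} {U : ℕ → ℝ}

noncomputable def matchValue (P : Fin m → Fin n → ℝ) (U : ℕ → ℝ) (r : ℕ) (X : Finset (Fin m))
    (Y : Finset (Fin n)) (w : ℕ) (i : Fin m) (j : Fin n) : ℝ :=
  P i j * gval m n P U r (insert i X) (insert j Y) (w + 1) +
    (1 - P i j) * gval m n P U r (insert i X) (insert j Y) w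

noncomputable def guarantee (P : Fin m → Fin n → ℝ) (U : ℕ → ℝ) (r : ℕ) (X : Finset (Fin m))
    (Y : Finset (Fin n)) (w : ℕ) (p : Fin m → ℝ) : ℝ :=
  sInf {u : ℝ | ∃ j, j ∉ Y ∧ u = ∑ i, p i * matchValue P U r X Y w i j}

theorem gval_zero (X : Finset (Fin m)) (Y : Finset (Fin n)) (w : ℕ) :
    gval m n P U 0 X Y w = U w := by
  rw [gval]

theorem gval_succ_s13 (r : ℕ) (X : Finset (Fin m)) (Y : Finset (Fin n)) (w : ℕ) :
    gval m n P U (r + 1) X Y w = sSup {v : ℝ | ∃ p : Fin m → ℝ,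
      (∀ i, 0 ≤ p i) ∧ (∀ i ∈ X, p i = 0) ∧ ∑ i, p i = 1 ∧ v = guarantee P U r X Y w p} := by
  rw [gval]; rfl

theorem matchValue_of_eq_one {r : ℕ} {X : Finset (Fin m)} {Y : Finset (Fin n)} {w : ℕ}
    {i : Fin m} {j : Fin n} (h : P i j = 1) :
    matchValue P U r X Y w i j = gval m n P U r (insert i X) (insert j Y) (w + 1) := by
  simp [matchValue, h]

theorem matchValue_of_eq_zero {r : ℕ} {X : Finset (Fin m)} {Y : Finset (Fin n)} {w : ℕ}
    {i : Fin m} {j : Fin n} (h : P i j = 0) :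
    matchValue P U r X Y w i j = gval m n P U r (insert i X) (insert j Y) w := by
  simp [matchValue, h]

theorem matchValue_mem_Icc (hP : ∀ i j, P i j ∈ Set.Icc 0 1) (hU : Monotone U) {r : ℕ}
    (hr : ∀ X Y w, #X + r ≤ m → #Y + r ≤ n → gval m n P U r X Y w ∈ Set.Icc (U w) (U (w + r)))
    {X : Finset (Fin m)} {Y : Finset (Fin n)} (hX : #X + (r + 1) ≤ m) (hY : #Y + (r + 1) ≤ n)
    (w : ℕ) (i : Fin m) (j : Fin n) :
    matchValue P U r X Y w i j ∈ Set.Icc (U w) (U (w + (r + 1))) := by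
  have hX' : #(insert i X) + r ≤ m := by have := card_insert_le i X; omega
  have hY' : #(insert j Y) + r ≤ n := by have := card_insert_le j Y; omega
  have hwin := Set.Icc_subset_Icc (hU (Nat.le_succ w))
    (hU (by omega : w + 1 + r ≤ w + (r + 1))) (hr _ _ (w + 1) hX' hY')
  have hloss := Set.Icc_subset_Icc le_rfl (hU (by omega : w + r ≤ w + (r + 1))) (hr _ _ w hX' hY')
  simpa only [matchValue, smul_eq_mul] using
    convex_Icc _ _ hwin hloss (hP i j).1 (sub_nonneg.2 (hP i j).2) (add_sub_cancel _ _)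

theorem guarantee_mem_Icc (hP : ∀ i j, P i j ∈ Set.Icc 0 1) (hU : Monotone U) {r : ℕ}
    (hr : ∀ X Y w, #X + r ≤ m → #Y + r ≤ n → gval m n P U r X Y w ∈ Set.Icc (U w) (U (w + r)))
    {X : Finset (Fin m)} {Y : Finset (Fin n)} (hX : #X + (r + 1) ≤ m) (hY : #Y + (r + 1) ≤ n)
    (w : ℕ) {p : Fin m → ℝ} (hp₀ : ∀ i, 0 ≤ p i) (hp₁ : ∑ i, p i = 1) :
    guarantee P U r X Y w p ∈ Set.Icc (U w) (U (w + (r + 1))) := by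
  obtain ⟨j₀, hj₀⟩ := Fin.exists_notMem_of_card_lt (s := Y) (by omega)
  refine csInf_mem_Icc_of_subset ⟨_, j₀, hj₀, rfl⟩ ?_
  rintro _ ⟨j, -, rfl⟩
  simpa only [smul_eq_mul] using (convex_Icc _ _).sum_mem (fun i _ => hp₀ i) hp₁
    fun i _ => matchValue_mem_Icc hP hU hr hX hY w i j

theorem gval_mem_Icc (hP : ∀ i j, P i j ∈ Set.Icc 0 1) (hU : Monotone U) (r : ℕ)
    {X : Finset (Fin m)} {Y : Finset (Fin n)} (hX : #X + r ≤ m) (hY : #Y + r ≤ n) (w : ℕ) :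
    gval m n P U r X Y w ∈ Set.Icc (U w) (U (w + r)) := by
  induction r generalizing X Y w with
  | zero => simp [gval_zero]
  | succ r ih =>
    obtain ⟨i₀, hi₀⟩ := Fin.exists_notMem_of_card_lt (s := X) (by omega)
    rw [gval_succ_s13]
    refine csSup_mem_Icc_of_subset ⟨_, Pi.single i₀ 1, ?_, ?_, by simp, rfl⟩ ?_
    · intro i
      by_cases h : i = i₀ <;> simp [h]
    · intro i hi
      simp [ne_of_mem_of_not_mem hi hi₀]
    · rintro _ ⟨p, hp₀, -, hp₁, rfl⟩
      exact guarantee_mem_Icc hP hU (fun X Y w hX hY => ih hX hY w) hX hY w hp₀ hp₁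

theorem le_gval_succ (hP : ∀ i j, P i j ∈ Set.Icc 0 1) (hU : Monotone U) {r : ℕ}
    {X : Finset (Fin m)} {Y : Finset (Fin n)} (hX : #X + (r + 1) ≤ m) (hY : #Y + (r + 1) ≤ n)
    {w : ℕ} {b : ℝ} {p : Fin m → ℝ} (hp₀ : ∀ i, 0 ≤ p i) (hpX : ∀ i ∈ X, p i = 0)
    (hp₁ : ∑ i, p i = 1) (h : ∀ j ∉ Y, b ≤ ∑ i, p i * matchValue P U r X Y w i j) :
    b ≤ gval m n P U (r + 1) X Y w := by
  have hr := fun X Y w (hX : #X + r ≤ m) (hY : #Y + r ≤ n) => gval_mem_Icc hP hU r hX hY w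
  obtain ⟨j₀, hj₀⟩ := Fin.exists_notMem_of_card_lt (s := Y) (by omega)
  rw [gval_succ_s13]
  refine le_csSup_of_le ⟨U (w + (r + 1)), ?_⟩ ⟨p, hp₀, hpX, hp₁, rfl⟩ ?_
  · rintro _ ⟨q, hq₀, -, hq₁, rfl⟩
    exact (guarantee_mem_Icc hP hU hr hX hY w hq₀ hq₁).2
  · refine le_csInf ⟨_, j₀, hj₀, rfl⟩ ?_
    rintro _ ⟨j, hj, rfl⟩
    exact h j hj

end GeneralGame

section DuelGame

variable {T r : ℕ}

noncomputable def duelMatrix (T : ℕ) : Fin (2 * T - 1) → Fin (2 * T - 1) → ℝ :=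
  fun i j => if (i : ℕ) = (j : ℕ) ∧ (i : ℕ) < T then (1 : ℝ) else 0

def ordinary (T : ℕ) : Finset (Fin (2 * T - 1)) := {i | (i : ℕ) < T}

/-- Indices `≥ T`: the dominated players of Team 1 and the invincible players of Team 2. -/
def reserves (T : ℕ) : Finset (Fin (2 * T - 1)) := (ordinary T)ᶜ

theorem mem_ordinary {i : Fin (2 * T - 1)} : i ∈ ordinary T ↔ (i : ℕ) < T := by
  simp [ordinary]

theorem mem_reserves {i : Fin (2 * T - 1)} : i ∈ reserves T ↔ T ≤ (i : ℕ) := by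
  simp [reserves, mem_ordinary]

theorem card_ordinary : #(ordinary T) = T := by
  rw [ordinary, Fin.card_filter_val_lt]; omega

theorem card_reserves : #(reserves T) = T - 1 := by
  rw [reserves, card_compl, card_ordinary, Fintype.card_fin]; omega

theorem duelMatrix_mem_Icc (i j : Fin (2 * T - 1)) : duelMatrix T i j ∈ Set.Icc 0 1 := by
  unfold duelMatrix; split_ifs <;> simp

theorem duelMatrix_self {i : Fin (2 * T - 1)} (hi : i ∈ ordinary T) : duelMatrix T i i = 1 :=
  if_pos ⟨rfl, mem_ordinary.1 hi⟩

theorem duelMatrix_of_mem_reserves (i : Fin (2 * T - 1)) {j : Fin (2 * T - 1)}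
    (hj : j ∈ reserves T) : duelMatrix T i j = 0 :=
  if_neg fun h => by have := mem_reserves.1 hj; omega

theorem UE_monotone : Monotone (UE T) := fun a b h => by
  simpa [UE] using (Nat.cast_le (α := ℝ)).2 h

theorem UE_succ (w : ℕ) : UE T (w + 1) = UE T w + 1 := by
  simp only [UE]; push_cast; ring

theorem UE_le_matchValue {X Y : Finset (Fin (2 * T - 1))} (hX : #X + (r + 1) ≤ 2 * T - 1)
    (hY : #Y + (r + 1) ≤ 2 * T - 1) (w : ℕ) (i j : Fin (2 * T - 1)) :
    UE T w ≤ matchValue (duelMatrix T) (UE T) r X Y w i j :=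
  (matchValue_mem_Icc duelMatrix_mem_Icc UE_monotone
    (fun _ _ w hX hY => gval_mem_Icc duelMatrix_mem_Icc UE_monotone r hX hY w) hX hY w i j).1

structure OnlyReservesPlayed (T r : ℕ) (X Y : Finset (Fin (2 * T - 1))) : Prop where
  subset_left : X ⊆ reserves T
  subset_right : Y ⊆ reserves T
  card_left : #X + r = T
  card_right : #Y + r = T

noncomputable def reserveStrategy (T r : ℕ) (X : Finset (Fin (2 * T - 1))) (i : Fin (2 * T - 1)) :
    ℝ :=
  (if i ∈ ordinary T then 1 / ((T : ℝ) * (r + 1)) else 0) +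
    (if i ∈ reserves T \ X then 1 / ((r : ℝ) + 1) else 0)

namespace OnlyReservesPlayed

variable {X Y : Finset (Fin (2 * T - 1))}

theorem card_add_le (h : OnlyReservesPlayed T (r + 1) X Y) :
    #X + (r + 1) ≤ 2 * T - 1 ∧ #Y + (r + 1) ≤ 2 * T - 1 := by
  have := h.card_left; have := h.card_right; omega

theorem cast_ne_zero (h : OnlyReservesPlayed T (r + 1) X Y) : (T : ℝ) ≠ 0 := by
  have := h.card_left; exact_mod_cast (by omega : T ≠ 0)

theorem card_sdiff (h : OnlyReservesPlayed T (r + 1) X Y) : #(reserves T \ X) = r := by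
  rw [card_sdiff_of_subset h.subset_left, card_reserves]; have := h.card_left; omega

theorem pos_of_mem_reserves (h : OnlyReservesPlayed T (r + 1) X Y) {j : Fin (2 * T - 1)}
    (hj : j ∈ reserves T) (hjY : j ∉ Y) : 0 < r := by
  have := card_le_card (insert_subset hj h.subset_right)
  rw [card_insert_of_notMem hjY, card_reserves] at this
  have := h.card_right; omega

theorem insert (h : OnlyReservesPlayed T (r + 1) X Y) {i j : Fin (2 * T - 1)}
    (hi : i ∈ reserves T \ X) (hj : j ∈ reserves T) (hjY : j ∉ Y) :
    OnlyReservesPlayed T r (insert i X) (insert j Y) := by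
  rw [mem_sdiff] at hi
  refine ⟨insert_subset hi.1 h.subset_left, insert_subset hj h.subset_right, ?_, ?_⟩
  · rw [card_insert_of_notMem hi.2]; have := h.card_left; omega
  · rw [card_insert_of_notMem hjY]; have := h.card_right; omega

end OnlyReservesPlayed

theorem reserveStrategy_nonneg (X : Finset (Fin (2 * T - 1))) (i : Fin (2 * T - 1)) :
    0 ≤ reserveStrategy T r X i := by
  unfold reserveStrategy; split_ifs <;> positivity

theorem reserveStrategy_of_mem_ordinary {X : Finset (Fin (2 * T - 1))} {i : Fin (2 * T - 1)}
    (hi : i ∈ ordinary T) : reserveStrategy T r X i = 1 / (T * (r + 1)) := by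
  have : i ∉ reserves T := by simpa [reserves] using hi
  simp [reserveStrategy, hi, this]

theorem reserveStrategy_of_mem_sdiff {X : Finset (Fin (2 * T - 1))} {i : Fin (2 * T - 1)}
    (hi : i ∈ reserves T \ X) : reserveStrategy T r X i = 1 / (r + 1) := by
  have : i ∉ ordinary T := by simpa [reserves] using (mem_sdiff.1 hi).1
  simp [reserveStrategy, hi, this]

theorem reserveStrategy_of_mem {X : Finset (Fin (2 * T - 1))} (hX : X ⊆ reserves T)
    {i : Fin (2 * T - 1)} (hi : i ∈ X) : reserveStrategy T r X i = 0 := by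
  have : i ∉ ordinary T := by simpa [reserves] using hX hi
  simp [reserveStrategy, hi, this]

theorem sum_reserveStrategy {X Y : Finset (Fin (2 * T - 1))}
    (h : OnlyReservesPlayed T (r + 1) X Y) : ∑ i, reserveStrategy T r X i = 1 := by
  have hT := h.cast_ne_zero
  simp only [reserveStrategy, sum_add_distrib, sum_ite_mem_eq, sum_const, card_ordinary,
    h.card_sdiff, nsmul_eq_mul]
  field_simp
  ring

theorem le_sum_reserveStrategy_mul_of_mem_ordinary {X Y : Finset (Fin (2 * T - 1))}
    (h : OnlyReservesPlayed T (r + 1) X Y) (w : ℕ) {j : Fin (2 * T - 1)} (hj : j ∈ ordinary T) :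
    UE T w + 1 / (T * (r + 1)) ≤
      ∑ i, reserveStrategy T r X i * matchValue (duelMatrix T) (UE T) r X Y w i j := by
  obtain ⟨hX, hY⟩ := h.card_add_le
  have hwin : UE T w + 1 ≤ matchValue (duelMatrix T) (UE T) r X Y w j j := by
    have := card_insert_le j X
    have := card_insert_le j Y
    rw [matchValue_of_eq_one (duelMatrix_self hj), ← UE_succ]
    exact (gval_mem_Icc duelMatrix_mem_Icc UE_monotone r (by omega) (by omega) _).1
  have := add_le_sum_mul_of_add_le (a := UE T w) (e := fun i => if i = j then 1 else 0)
    (f := fun i => matchValue (duelMatrix T) (UE T) r X Y w i j)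
    (reserveStrategy_nonneg X) (sum_reserveStrategy h) fun i => by
      split_ifs with hij
      · exact hij ▸ hwin
      · simpa using UE_le_matchValue hX hY w i j
  simpa [reserveStrategy_of_mem_ordinary hj] using this

theorem le_sum_reserveStrategy_mul_of_mem_reserves {X Y : Finset (Fin (2 * T - 1))}
    (ih : ∀ X' Y' w', OnlyReservesPlayed T r X' Y' →
      UE T w' + 1 / (T * r) ≤ gval (2 * T - 1) (2 * T - 1) (duelMatrix T) (UE T) r X' Y' w')
    (h : OnlyReservesPlayed T (r + 1) X Y) (w : ℕ) {j : Fin (2 * T - 1)} (hj : j ∈ reserves T)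
    (hjY : j ∉ Y) :
    UE T w + 1 / (T * (r + 1)) ≤
      ∑ i, reserveStrategy T r X i * matchValue (duelMatrix T) (UE T) r X Y w i j := by
  obtain ⟨hX, hY⟩ := h.card_add_le
  have hr : (r : ℝ) ≠ 0 := by exact_mod_cast (h.pos_of_mem_reserves hj hjY).ne'
  have hT := h.cast_ne_zero
  have := add_le_sum_mul_of_add_le (a := UE T w)
    (e := fun i => if i ∈ reserves T \ X then 1 / (T * r) else 0)
    (f := fun i => matchValue (duelMatrix T) (UE T) r X Y w i j)
    (reserveStrategy_nonneg X) (sum_reserveStrategy h) fun i => by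
      split_ifs with hi
      · rw [matchValue_of_eq_zero (duelMatrix_of_mem_reserves i hj)]
        exact ih _ _ w (h.insert hi hj hjY)
      · simpa using UE_le_matchValue hX hY w i j
  convert this using 2
  simp only [mul_ite, mul_zero, sum_ite_mem_eq]
  rw [sum_congr rfl fun i hi => by rw [reserveStrategy_of_mem_sdiff hi], sum_const, h.card_sdiff,
    nsmul_eq_mul]
  field_simp

theorem UE_add_inv_le_gval (T : ℕ) : ∀ r, 0 < r → ∀ {X Y : Finset (Fin (2 * T - 1))} (w : ℕ),
    OnlyReservesPlayed T r X Y →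
      UE T w + 1 / (T * r) ≤ gval (2 * T - 1) (2 * T - 1) (duelMatrix T) (UE T) r X Y w
  | r + 1, _, X, Y, w, h => by
    obtain ⟨hX, hY⟩ := h.card_add_le
    refine le_gval_succ duelMatrix_mem_Icc UE_monotone hX hY (reserveStrategy_nonneg X)
      (fun i hi => reserveStrategy_of_mem h.subset_left hi) (sum_reserveStrategy h) fun j hjY => ?_
    push_cast
    by_cases hj : j ∈ ordinary T
    · exact le_sum_reserveStrategy_mul_of_mem_ordinary h w hj
    · have hj : j ∈ reserves T := mem_compl.2 hj
      exact le_sum_reserveStrategy_mul_of_mem_reserves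
        (fun _ _ w' h' => UE_add_inv_le_gval T r (h.pos_of_mem_reserves hj hjY) w' h') h w hj hjY

end DuelGame

/-- Let `T ≥ 1`, `m = n = 2T-1`, `U = U_E`, and let
`P i j = 1` iff `i = j ≤ T` (Team 1 has `T` ordinary players plus `T-1` dominated
ones; Team 2 has `T-1` extra invincible players).  Then the value is `> -T/2`:
with `T-1` dominated players recruited, Team 1 wins a strictly positive expected
number of rounds. -/
theorem enough_dominated_players_help_UE (T : ℕ) (hT : 1 ≤ T) :
    gval (2 * T - 1) (2 * T - 1)
      (fun i j => if (i : ℕ) = (j : ℕ) ∧ (i : ℕ) < T then (1 : ℝ) else 0)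
      (UE T) T ∅ ∅ 0 > -(T : ℝ) / 2 := by
  have hbound := UE_add_inv_le_gval T T hT (X := ∅) (Y := ∅) 0
    ⟨empty_subset _, empty_subset _, by simp, by simp⟩
  have hT₀ : (0 : ℝ) < T := by exact_mod_cast hT
  have hUE : UE T 0 = -(T : ℝ) / 2 := by simp only [UE, Nat.cast_zero]; ring
  have hgain : (0 : ℝ) < 1 / (T * T) := by positivity
  exact lt_of_lt_of_le (by linarith) hbound
end
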